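/- arXiv:2412.09746 — 4 statements merged into one kernel-verified Lean document; each statement's English description precedes it below -/
import Mathlib

section
/- Let V ∈ ℝ^{n×r}, M ∈ ℝ^{r×n}, S ∈ ℝ^{n×k}, H ∈ ℝ^{q×k}, and γ > 0. Then the unique minimizer W ∈ ℝ^{n×q} of the objective ‖V M S + W H − S‖_F² + γ ‖W‖_F² is W = (V M − I_n) S K with K = −Hᵀ (H Hᵀ + γ I_q)⁻¹; in particular, there exists a matrix K ∈ ℝ^{k×q} such that W = (V M − I_n) S K. -/
open Matrix BigOperators

/-- Squared Frobenius norm of a real matrix. -/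
noncomputable def frobSq {α β : Type*} [Fintype α] [Fintype β]
    (A : Matrix α β ℝ) : ℝ := ∑ i, ∑ j, (A i j) ^ 2

noncomputable def fip {α β : Type*} [Fintype α] [Fintype β]
    (A B : Matrix α β ℝ) : ℝ := ∑ i, ∑ j, A i j * B i j

lemma frobSq_nonneg {α β : Type*} [Fintype α] [Fintype β] (A : Matrix α β ℝ) :
    0 ≤ frobSq A :=
  Finset.sum_nonneg fun _ _ => Finset.sum_nonneg fun _ _ => sq_nonneg _

lemma frobSq_pos {α β : Type*} [Fintype α] [Fintype β] {A : Matrix α β ℝ}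
    (hA : A ≠ 0) : 0 < frobSq A := by
  obtain ⟨i, j, hij⟩ : ∃ i j, A i j ≠ 0 := by
    by_contra h
    push_neg at h
    exact hA (by ext i j; simp [h])
  have h0 : 0 < (A i j) ^ 2 := lt_of_le_of_ne (sq_nonneg _) (Ne.symm (pow_ne_zero 2 hij))
  have h1 : (A i j) ^ 2 ≤ ∑ j', (A i j') ^ 2 :=
    Finset.single_le_sum (f := fun j' => (A i j') ^ 2) (fun _ _ => sq_nonneg _)
      (Finset.mem_univ j)
  have h2 : ∑ j', (A i j') ^ 2 ≤ frobSq A :=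
    Finset.single_le_sum (f := fun i' => ∑ j', (A i' j') ^ 2)
      (fun _ _ => Finset.sum_nonneg fun _ _ => sq_nonneg _) (Finset.mem_univ i)
  linarith

lemma frobSq_add {α β : Type*} [Fintype α] [Fintype β] (A B : Matrix α β ℝ) :
    frobSq (A + B) = frobSq A + 2 * fip A B + frobSq B := by
  simp only [frobSq, fip, Matrix.add_apply, Finset.mul_sum, ← Finset.sum_add_distrib]
  congr 1; ext i; congr 1; ext j; ring

lemma fip_mul_right {α β γ : Type*} [Fintype α] [Fintype β] [Fintype γ]
    (X : Matrix α γ ℝ) (D : Matrix α β ℝ) (H : Matrix β γ ℝ) :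
    fip X (D * H) = fip (X * Hᵀ) D := by
  simp only [fip, Matrix.mul_apply, Matrix.transpose_apply, Finset.mul_sum, Finset.sum_mul]
  rw [Finset.sum_congr rfl fun i _ => Finset.sum_comm]
  congr 1; ext i; congr 1; ext l; congr 1; ext j; ring

lemma fip_add_left {α β : Type*} [Fintype α] [Fintype β] (A B D : Matrix α β ℝ) :
    fip (A + B) D = fip A D + fip B D := by
  simp only [fip, Matrix.add_apply, ← Finset.sum_add_distrib]
  congr 1; ext i; congr 1; ext j; ring

lemma fip_smul_left {α β : Type*} [Fintype α] [Fintype β] (c : ℝ) (A D : Matrix α β ℝ) :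
    fip (c • A) D = c * fip A D := by
  simp only [fip, Matrix.smul_apply, smul_eq_mul, Finset.mul_sum]
  congr 1; ext i; congr 1; ext j; ring

/-- The unique minimizer of `W ↦ ‖V M S + W H − S‖_F² + γ ‖W‖_F²` is
`W = (V M − I) S K` with `K = −Hᵀ (H Hᵀ + γ I)⁻¹`; in particular there exists a matrix
`K` with `W = (V M − I) S K`. -/
theorem stmt_1 {n r k q : ℕ}
    (V : Matrix (Fin n) (Fin r) ℝ) (M : Matrix (Fin r) (Fin n) ℝ)
    (S : Matrix (Fin n) (Fin k) ℝ) (H : Matrix (Fin q) (Fin k) ℝ)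
    (γ : ℝ) (hγ : 0 < γ)
    (K : Matrix (Fin k) (Fin q) ℝ)
    (hK : K = -(Hᵀ * (H * Hᵀ + γ • (1 : Matrix (Fin q) (Fin q) ℝ))⁻¹))
    (Wstar : Matrix (Fin n) (Fin q) ℝ)
    (hW : Wstar = (V * M - 1) * S * K) :
    (∀ W : Matrix (Fin n) (Fin q) ℝ,
        frobSq (V * M * S + Wstar * H - S) + γ * frobSq Wstar
        ≤ frobSq (V * M * S + W * H - S) + γ * frobSq W) ∧
    (∀ W : Matrix (Fin n) (Fin q) ℝ, W ≠ Wstar →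
        frobSq (V * M * S + Wstar * H - S) + γ * frobSq Wstar
        < frobSq (V * M * S + W * H - S) + γ * frobSq W) ∧
    (∃ K' : Matrix (Fin k) (Fin q) ℝ, Wstar = (V * M - 1) * S * K') := by
  set G := H * Hᵀ + γ • (1 : Matrix (Fin q) (Fin q) ℝ) with hG
  have hHt : Hᴴ = Hᵀ := by ext i j; simp [Matrix.conjTranspose_apply]
  have hHHt : (H * Hᵀ).PosSemidef := by
    have := Matrix.posSemidef_self_mul_conjTranspose H
    rwa [hHt] at this
  have hsm : (γ • (1 : Matrix (Fin q) (Fin q) ℝ)).PosDef := by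
    rw [Matrix.smul_one_eq_diagonal]
    exact Matrix.PosDef.diagonal (fun _ => hγ)
  have hGpd : G.PosDef := Matrix.PosDef.posSemidef_add hHHt hsm
  have hGinv : G⁻¹ * G = 1 :=
    Matrix.nonsing_inv_mul _ ((Matrix.isUnit_iff_isUnit_det _).1 hGpd.isUnit)
  set E := V * M * S - S with hE
  have hWE : Wstar = -(E * Hᵀ * G⁻¹) := by
    rw [hW, hK, Matrix.sub_mul, Matrix.one_mul]
    simp [Matrix.mul_neg, Matrix.mul_assoc, hE]
  have key : G⁻¹ * (H * Hᵀ) + γ • G⁻¹ = 1 := by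
    rw [← hGinv, hG, Matrix.mul_add, Matrix.mul_smul, Matrix.mul_one]
  have hNorm : (E + Wstar * H) * Hᵀ + γ • Wstar = 0 := by
    rw [hWE]
    have expand : (E + -(E * Hᵀ * G⁻¹) * H) * Hᵀ + γ • -(E * Hᵀ * G⁻¹)
        = E * Hᵀ - E * Hᵀ * (G⁻¹ * (H * Hᵀ) + γ • G⁻¹) := by
      simp only [Matrix.add_mul, Matrix.neg_mul, Matrix.mul_add, Matrix.mul_smul,
        smul_neg, Matrix.mul_assoc, sub_eq_add_neg, neg_add]
      abel
    rw [expand, key, Matrix.mul_one, sub_self]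
  have main : ∀ W : Matrix (Fin n) (Fin q) ℝ,
      frobSq (V * M * S + W * H - S) + γ * frobSq W
      = (frobSq (V * M * S + Wstar * H - S) + γ * frobSq Wstar)
        + (frobSq ((W - Wstar) * H) + γ * frobSq (W - Wstar)) := by
    intro W
    set D := W - Wstar with hD
    have e2 : W = Wstar + D := by rw [hD]; abel
    have e0 : V * M * S + Wstar * H - S = E + Wstar * H := by rw [hE]; abel
    have e1 : V * M * S + W * H - S = (E + Wstar * H) + D * H := by
      rw [e2, Matrix.add_mul, hE]; abel
    have c1 : frobSq (V * M * S + W * H - S)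
        = frobSq (E + Wstar * H) + 2 * fip (E + Wstar * H) (D * H) + frobSq (D * H) := by
      rw [e1, frobSq_add]
    have c2 : frobSq W = frobSq Wstar + 2 * fip Wstar D + frobSq D := by
      rw [e2, frobSq_add]
    have czero : fip (E + Wstar * H) (D * H) + γ * fip Wstar D = 0 := by
      rw [fip_mul_right, ← fip_smul_left, ← fip_add_left, hNorm]
      simp [fip]
    rw [c1, c2, e0]
    linear_combination 2 * czero
  refine ⟨?_, ?_, ⟨K, hW⟩⟩
  · intro W
    rw [main W]
    have h1 := frobSq_nonneg ((W - Wstar) * H)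
    have h2 : 0 ≤ γ * frobSq (W - Wstar) := mul_nonneg hγ.le (frobSq_nonneg _)
    linarith
  · intro W hne
    rw [main W]
    have h1 := frobSq_nonneg ((W - Wstar) * H)
    have h2 : 0 < γ * frobSq (W - Wstar) :=
      mul_pos hγ (frobSq_pos (sub_ne_zero.2 hne))
    linarith
end

section
/- Let n, r, m, k be positive integers and let h : ℝ^r → ℝ^{r(r+1)/2} be the quadratic feature map sending z = (z_1,…,z_r) to the vector of products (z_i z_j)_{1 ≤ i ≤ j ≤ r}. Let P ∈ ℝ^{m×n} and V ∈ ℝ^{n×r} be such that (P V)ᵀ (P V) is invertible, and set M = ((P V)ᵀ (P V))⁻¹ (P V)ᵀ P. Let S ∈ ℝ^{n×k}, γ > 0, let H ∈ ℝ^{r(r+1)/2 × k} be the matrix whose j-th column is h applied to the j-th column of M S, and let W = −(V M S − S) Hᵀ (H Hᵀ + γ I)⁻¹, i.e., W is the unique minimizer of ‖V M S + W H − S‖_F² + γ ‖W‖_F². Then the QMSR reconstruction map p : ℝ^n → ℝ^n, p(s) = V (M s) + W h(M s), is idempotent: p(p(s)) = p(s) for all s ∈ ℝ^n. -/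
open Matrix

/-- QMSR: with the quadratic feature map `h` (sending `z` to the vector of products
`z_i z_j`, `i ≤ j`, enumerated by an equivalence `e : Fin (r(r+1)/2) ≃ {(i,j) | i ≤ j}`),
the sparse encoding matrix `M = ((P V)ᵀ (P V))⁻¹ (P V)ᵀ P`, the feature matrix `H` of the
encoded training data `M S`, and the ridge-regression weight matrix
`W = −(V M S − S) Hᵀ (H Hᵀ + γ I)⁻¹`, the reconstruction map
`p(s) = V (M s) + W h(M s)` is idempotent. -/
theorem stmt_5 (n r m k : ℕ) (hn : 0 < n) (hr : 0 < r) (hm : 0 < m) (hk : 0 < k)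
    (e : Fin (r * (r + 1) / 2) ≃ {p : Fin r × Fin r // p.1 ≤ p.2})
    (h : (Fin r → ℝ) → (Fin (r * (r + 1) / 2) → ℝ))
    (hh : ∀ (z : Fin r → ℝ) (i : Fin (r * (r + 1) / 2)),
      h z i = z (e i).1.1 * z (e i).1.2)
    (P : Matrix (Fin m) (Fin n) ℝ) (V : Matrix (Fin n) (Fin r) ℝ)
    (hPV : IsUnit ((P * V)ᵀ * (P * V)))
    (M : Matrix (Fin r) (Fin n) ℝ)
    (hM : M = ((P * V)ᵀ * (P * V))⁻¹ * (P * V)ᵀ * P)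
    (S : Matrix (Fin n) (Fin k) ℝ) (γ : ℝ) (hγ : 0 < γ)
    (H : Matrix (Fin (r * (r + 1) / 2)) (Fin k) ℝ)
    (hH : ∀ i j, H i j = h (fun l => (M * S) l j) i)
    (W : Matrix (Fin n) (Fin (r * (r + 1) / 2)) ℝ)
    (hW : W = -((V * M * S - S) * Hᵀ *
      (H * Hᵀ + γ • (1 : Matrix (Fin (r * (r + 1) / 2)) (Fin (r * (r + 1) / 2)) ℝ))⁻¹))
    (p : (Fin n → ℝ) → (Fin n → ℝ))
    (hp : ∀ s, p s = V.mulVec (M.mulVec s) + W.mulVec (h (M.mulVec s))) :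
    ∀ s : Fin n → ℝ, p (p s) = p s := by
  have hinv : (((P * V)ᵀ * (P * V))⁻¹ : Matrix (Fin r) (Fin r) ℝ) * ((P * V)ᵀ * (P * V)) = 1 :=
    nonsing_inv_mul _ ((isUnit_iff_isUnit_det _).mp hPV)
  have hMV : M * V = 1 := by
    rw [hM]
    calc ((P * V)ᵀ * (P * V))⁻¹ * (P * V)ᵀ * P * V
        = ((P * V)ᵀ * (P * V))⁻¹ * ((P * V)ᵀ * (P * V)) := by
          simp only [Matrix.mul_assoc]
      _ = 1 := hinv
  have hMW : M * W = 0 := by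
    have key : M * (V * M * S - S) = 0 := by
      rw [Matrix.mul_sub]
      have : M * (V * M * S) = M * S := by
        rw [show M * (V * M * S) = (M * V) * (M * S) by simp only [Matrix.mul_assoc],
          hMV, Matrix.one_mul]
      rw [this, sub_self]
    have key' : M * (V * (M * S) - S) = 0 := by rw [← Matrix.mul_assoc V]; exact key
    rw [hW, Matrix.mul_neg, Matrix.mul_assoc, Matrix.mul_assoc, ← Matrix.mul_assoc M,
      key', Matrix.zero_mul, neg_zero]
  intro s
  have hMp : M.mulVec (p s) = M.mulVec s := by
    simp [hp, Matrix.mulVec_add, Matrix.mulVec_mulVec, hMW, ← Matrix.mul_assoc, hMV]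
  rw [hp (p s), hMp, ← hp]
end

section
/- Let n, r, m, k be positive integers and let h : ℝ^r → ℝ^{r(r+1)/2} be the quadratic feature map sending z = (z_1,…,z_r) to the vector of products (z_i z_j)_{1 ≤ i ≤ j ≤ r}. Let P ∈ ℝ^{m×n} and V ∈ ℝ^{n×r} be such that (P V)ᵀ (P V) is invertible, and set M = ((P V)ᵀ (P V))⁻¹ (P V)ᵀ P. Let S ∈ ℝ^{n×k}, γ > 0, let H be the matrix whose j-th column is h applied to the j-th column of M S, and let W = −(V M S − S) Hᵀ (H Hᵀ + γ I)⁻¹, i.e., W is the unique minimizer of ‖V M S + W H − S‖_F² + γ ‖W‖_F². If s = V z + W h(z) for some z ∈ ℝ^r (i.e., s lies on the quadratic manifold M_r(V,W) = { V z + W h(z) : z ∈ ℝ^r }), then the QMSR approximation ŝ = V (M s) + W h(M s) equals s. -/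
open Matrix

/-- QMSR exact recovery: with the quadratic feature map `h`, the sparse encoding matrix
`M = ((P V)ᵀ (P V))⁻¹ (P V)ᵀ P`, the feature matrix `H` of the encoded training data, and
the ridge-regression weight matrix `W = −(V M S − S) Hᵀ (H Hᵀ + γ I)⁻¹`, every point
`s = V z + W h(z)` on the quadratic manifold satisfies
`V (M s) + W h(M s) = s`. -/
theorem stmt_9 (n r m k : ℕ) (hn : 0 < n) (hr : 0 < r) (hm : 0 < m) (hk : 0 < k)
    (e : Fin (r * (r + 1) / 2) ≃ {p : Fin r × Fin r // p.1 ≤ p.2})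
    (h : (Fin r → ℝ) → (Fin (r * (r + 1) / 2) → ℝ))
    (hh : ∀ (z : Fin r → ℝ) (i : Fin (r * (r + 1) / 2)),
      h z i = z (e i).1.1 * z (e i).1.2)
    (P : Matrix (Fin m) (Fin n) ℝ) (V : Matrix (Fin n) (Fin r) ℝ)
    (hPV : IsUnit ((P * V)ᵀ * (P * V)))
    (M : Matrix (Fin r) (Fin n) ℝ)
    (hM : M = ((P * V)ᵀ * (P * V))⁻¹ * (P * V)ᵀ * P)
    (S : Matrix (Fin n) (Fin k) ℝ) (γ : ℝ) (hγ : 0 < γ)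
    (H : Matrix (Fin (r * (r + 1) / 2)) (Fin k) ℝ)
    (hH : ∀ i j, H i j = h (fun l => (M * S) l j) i)
    (W : Matrix (Fin n) (Fin (r * (r + 1) / 2)) ℝ)
    (hW : W = -((V * M * S - S) * Hᵀ *
      (H * Hᵀ + γ • (1 : Matrix (Fin (r * (r + 1) / 2)) (Fin (r * (r + 1) / 2)) ℝ))⁻¹)) :
    ∀ s : Fin n → ℝ, (∃ z : Fin r → ℝ, s = V.mulVec z + W.mulVec (h z)) →
      V.mulVec (M.mulVec s) + W.mulVec (h (M.mulVec s)) = s := by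
  intro s ⟨z, hs⟩
  have hMV : M * V = 1 := by
    rw [hM, Matrix.mul_assoc, Matrix.mul_assoc]
    exact Matrix.nonsing_inv_mul _ ((Matrix.isUnit_iff_isUnit_det _).mp hPV)
  have hMW : M * W = 0 := by
    rw [hW, Matrix.mul_neg, ← Matrix.mul_assoc, ← Matrix.mul_assoc,
      Matrix.mul_sub, ← Matrix.mul_assoc, ← Matrix.mul_assoc, hMV, Matrix.one_mul,
      sub_self, Matrix.zero_mul, Matrix.zero_mul, neg_zero]
  have hz : M.mulVec s = z := by
    rw [hs, Matrix.mulVec_add, Matrix.mulVec_mulVec, Matrix.mulVec_mulVec, hMV, hMW,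
      Matrix.one_mulVec, Matrix.zero_mulVec, add_zero]
  rw [hz, hs]
end

section
/- Let n, r, m, k be positive integers and let h : ℝ^r → ℝ^{r(r+1)/2} be the quadratic feature map sending z = (z_1,…,z_r) to the vector of products (z_i z_j)_{1 ≤ i ≤ j ≤ r}. Let P ∈ ℝ^{m×n} and V ∈ ℝ^{n×r} be such that (P V)ᵀ (P V) is invertible, and set M = ((P V)ᵀ (P V))⁻¹ (P V)ᵀ P. Let S ∈ ℝ^{n×k}, γ > 0, let H be the matrix whose j-th column is h applied to the j-th column of M S, and let W = −(V M S − S) Hᵀ (H Hᵀ + γ I)⁻¹, the unique minimizer of ‖V M S + W H − S‖_F² + γ ‖W‖_F². Then for every s ∈ ℝ^n, the QMSR approximation ŝ = V (M s) + W h(M s) is the unique minimizer over the quadratic manifold M_r(V,W) = { V z + W h(z) : z ∈ ℝ^r } of x ↦ ‖M (x − s)‖₂²: for every z ∈ ℝ^r, ‖M·(V z + W h(z) − s)‖₂² ≥ ‖M (ŝ − s)‖₂², with equality only if V z + W h(z) = ŝ. -/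
open Matrix BigOperators

/-- Squared Euclidean norm of a real vector. -/
noncomputable def enormSq {α : Type*} [Fintype α] (x : α → ℝ) : ℝ :=
  ∑ i, (x i) ^ 2

/-- QMSR optimality: with the quadratic feature map `h`, encoding matrix
`M = ((P V)ᵀ (P V))⁻¹ (P V)ᵀ P`, and ridge-regression weight matrix
`W = −(V M S − S) Hᵀ (H Hᵀ + γ I)⁻¹`, the QMSR approximation
`ŝ = V (M s) + W h(M s)` is the unique minimizer over the quadratic manifold
`{ V z + W h(z) : z }` of `x ↦ ‖M (x − s)‖₂²`. -/
theorem stmt_12 (n r m k : ℕ) (hn : 0 < n) (hr : 0 < r) (hm : 0 < m) (hk : 0 < k)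
    (e : Fin (r * (r + 1) / 2) ≃ {p : Fin r × Fin r // p.1 ≤ p.2})
    (h : (Fin r → ℝ) → (Fin (r * (r + 1) / 2) → ℝ))
    (hh : ∀ (z : Fin r → ℝ) (i : Fin (r * (r + 1) / 2)),
      h z i = z (e i).1.1 * z (e i).1.2)
    (P : Matrix (Fin m) (Fin n) ℝ) (V : Matrix (Fin n) (Fin r) ℝ)
    (hPV : IsUnit ((P * V)ᵀ * (P * V)))
    (M : Matrix (Fin r) (Fin n) ℝ)
    (hM : M = ((P * V)ᵀ * (P * V))⁻¹ * (P * V)ᵀ * P)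
    (S : Matrix (Fin n) (Fin k) ℝ) (γ : ℝ) (hγ : 0 < γ)
    (H : Matrix (Fin (r * (r + 1) / 2)) (Fin k) ℝ)
    (hH : ∀ i j, H i j = h (fun l => (M * S) l j) i)
    (W : Matrix (Fin n) (Fin (r * (r + 1) / 2)) ℝ)
    (hW : W = -((V * M * S - S) * Hᵀ *
      (H * Hᵀ + γ • (1 : Matrix (Fin (r * (r + 1) / 2)) (Fin (r * (r + 1) / 2)) ℝ))⁻¹)) :
    ∀ (s : Fin n → ℝ) (shat : Fin n → ℝ),
      shat = V.mulVec (M.mulVec s) + W.mulVec (h (M.mulVec s)) →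
      ∀ z : Fin r → ℝ,
        enormSq (M.mulVec (shat - s))
          ≤ enormSq (M.mulVec (V.mulVec z + W.mulVec (h z) - s)) ∧
        (enormSq (M.mulVec (V.mulVec z + W.mulVec (h z) - s))
            = enormSq (M.mulVec (shat - s)) →
          V.mulVec z + W.mulVec (h z) = shat) := by
  have hdet : IsUnit ((P * V)ᵀ * (P * V)).det :=
    (Matrix.isUnit_iff_isUnit_det _).mp hPV
  have hMV : M * V = 1 := by
    rw [hM, Matrix.mul_assoc (((P * V)ᵀ * (P * V))⁻¹ * (P * V)ᵀ) P V,
      Matrix.mul_assoc ((P * V)ᵀ * (P * V))⁻¹ (P * V)ᵀ (P * V),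
      Matrix.nonsing_inv_mul _ hdet]
  have hMW : M * W = 0 := by
    rw [hW, Matrix.mul_neg, ← Matrix.mul_assoc, ← Matrix.mul_assoc]
    have : M * (V * M * S - S) = 0 := by
      rw [Matrix.mul_sub, ← Matrix.mul_assoc, ← Matrix.mul_assoc, hMV,
        Matrix.one_mul, sub_self]
    rw [this, Matrix.zero_mul, Matrix.zero_mul, neg_zero]
  -- key computation
  have key : ∀ (z : Fin r → ℝ) (s : Fin n → ℝ),
      M.mulVec (V.mulVec z + W.mulVec (h z) - s) = z - M.mulVec s := by
    intro z s
    rw [Matrix.mulVec_sub, Matrix.mulVec_add, Matrix.mulVec_mulVec,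
      Matrix.mulVec_mulVec, hMV, hMW, Matrix.one_mulVec, Matrix.zero_mulVec,
      add_zero]
  intro s shat hshat z
  have hshat0 : M.mulVec (shat - s) = 0 := by
    rw [hshat, key, sub_self]
  have hz : M.mulVec (V.mulVec z + W.mulVec (h z) - s) = z - M.mulVec s :=
    key z s
  have hnn : ∀ x : Fin r → ℝ, 0 ≤ enormSq x := by
    intro x; exact Finset.sum_nonneg fun i _ => sq_nonneg _
  have h0 : enormSq (M.mulVec (shat - s)) = 0 := by
    rw [hshat0]; simp [enormSq]
  constructor
  · rw [h0]; exact hnn _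
  · intro heq
    rw [h0, hz] at heq
    have hz0 : z - M.mulVec s = 0 := by
      funext i
      have := (Finset.sum_eq_zero_iff_of_nonneg
        (fun i _ => sq_nonneg ((z - M.mulVec s) i))).mp heq i (Finset.mem_univ i)
      exact pow_eq_zero_iff (by norm_num) |>.mp this
    have hz' : z = M.mulVec s := by
      have := sub_eq_zero.mp hz0; exact this
    rw [hz', hshat]
end
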